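/- Let (X₁, X₂) be jointly Gaussian with variances ν₁₁, ν₂₂ and covariance ν₁₂. Then E[φ'(X₁)Φ(X₂)] = -(μ₁/(1+ν₁₁)) E[φ(X₁)Φ(X₂)] - (ν₁₂/(1+ν₁₁)) E[φ(X₁)φ(X₂)], where μ₁ = E[X₁]. -/

import Mathlib

/-!
Write `X₁ = μ₁ + a Z₁` and `X₂ = μ₂ + b Z₁ + c Z₂` with `Z₁, Z₂` independent standard Gaussians.
Since `φ'(x) = -x φ(x)`, we have `φ'(X₁) Φ(X₂) = -μ₁ φ(X₁) Φ(X₂) - a Z₁ φ(X₁) Φ(X₂)`. Stein's lemma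
`E[Z g(Z)] = E[g'(Z)]` (integration by parts against `φ`), applied in `Z₁` for fixed `Z₂` to
`g = φ(μ₁ + a ·) Φ(μ₂ + b · + c Z₂)`, gives
`E[Z₁ φ(X₁) Φ(X₂)] = a E[φ'(X₁) Φ(X₂)] + b E[φ(X₁) φ(X₂)]`.
Substituting, `E[φ'(X₁) Φ(X₂)]` solves a linear equation with leading coefficient `1 + a² = 1 + ν₁₁`.
-/

open MeasureTheory ProbabilityTheory Real
open scoped NNReal

noncomputable def npdf (x : ℝ) : ℝ := (Real.sqrt (2 * Real.pi))⁻¹ * Real.exp (-(x ^ 2) / 2)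

noncomputable def ncdf (x : ℝ) : ℝ := ∫ t in Set.Iic x, npdf t

noncomputable def P2 : Measure (ℝ × ℝ) :=
  (ProbabilityTheory.gaussianReal 0 1).prod (ProbabilityTheory.gaussianReal 0 1)

lemma npdf_eq_gaussianPDFReal : npdf = gaussianPDFReal 0 1 := by
  funext x
  simp [npdf, gaussianPDFReal]

lemma npdf_nonneg (x : ℝ) : 0 ≤ npdf x := by
  unfold npdf; positivity

lemma inv_sqrt_two_pi_le_one : (√(2 * π))⁻¹ ≤ 1 :=
  inv_le_one_of_one_le₀ (Real.one_le_sqrt.mpr (by linarith [Real.pi_gt_three]))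

lemma npdf_le_one (x : ℝ) : npdf x ≤ 1 := by
  have : rexp (-(x ^ 2) / 2) ≤ 1 := Real.exp_le_one_iff.mpr (by nlinarith [sq_nonneg x])
  unfold npdf
  nlinarith [inv_sqrt_two_pi_le_one, Real.exp_pos (-(x ^ 2) / 2)]

lemma abs_npdf_le_one (x : ℝ) : |npdf x| ≤ 1 := by
  rw [abs_of_nonneg (npdf_nonneg x)]; exact npdf_le_one x

lemma abs_mul_npdf_le_one (x : ℝ) : |x| * npdf x ≤ 1 := by
  have hx : |x| ≤ rexp (x ^ 2 / 2) := by
    nlinarith [Real.add_one_le_exp (x ^ 2 / 2), sq_abs x, sq_nonneg (|x| - 1)]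
  have hexp : rexp (x ^ 2 / 2) * rexp (-(x ^ 2) / 2) = 1 := by
    rw [← Real.exp_add]; ring_nf; exact Real.exp_zero
  have : |x| * rexp (-(x ^ 2) / 2) ≤ 1 := by
    nlinarith [Real.exp_pos (-(x ^ 2) / 2)]
  calc |x| * npdf x = (√(2 * π))⁻¹ * (|x| * rexp (-(x ^ 2) / 2)) := by unfold npdf; ring
    _ ≤ 1 * 1 := mul_le_mul inv_sqrt_two_pi_le_one this (by positivity) zero_le_one
    _ = 1 := one_mul 1

@[fun_prop]
lemma continuous_npdf : Continuous npdf := by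
  unfold npdf; fun_prop

lemma hasDerivAt_npdf (x : ℝ) : HasDerivAt npdf (-x * npdf x) x := by
  have hexponent : HasDerivAt (fun y : ℝ => -(y ^ 2) / 2) (-x) x :=
    ((hasDerivAt_pow 2 x).fun_neg.div_const 2).congr_deriv (by ring)
  exact (hexponent.exp.const_mul (√(2 * π))⁻¹).congr_deriv (by unfold npdf; ring)

lemma deriv_npdf (x : ℝ) : deriv npdf x = -x * npdf x :=
  (hasDerivAt_npdf x).deriv

lemma abs_deriv_npdf_le_one (x : ℝ) : |deriv npdf x| ≤ 1 := by
  rw [deriv_npdf, abs_mul, abs_neg, abs_of_nonneg (npdf_nonneg x)]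
  exact abs_mul_npdf_le_one x

@[fun_prop]
lemma continuous_deriv_npdf : Continuous (deriv npdf) := by
  rw [show deriv npdf = fun x => -x * npdf x from funext deriv_npdf]; fun_prop

lemma integrable_npdf : Integrable npdf :=
  npdf_eq_gaussianPDFReal ▸ integrable_gaussianPDFReal 0 1

lemma integral_npdf : ∫ x, npdf x = 1 :=
  npdf_eq_gaussianPDFReal ▸ integral_gaussianPDFReal_eq_one 0 one_ne_zero

lemma integrable_mul_npdf : Integrable fun x => x * npdf x := by
  convert (integrable_mul_exp_neg_mul_sq (b := 1 / 2) (by norm_num)).const_mul (√(2 * π))⁻¹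
    using 2 with x
  unfold npdf; ring_nf

lemma ncdf_nonneg (x : ℝ) : 0 ≤ ncdf x :=
  setIntegral_nonneg measurableSet_Iic fun t _ => npdf_nonneg t

lemma ncdf_le_one (x : ℝ) : ncdf x ≤ 1 :=
  integral_npdf ▸ setIntegral_le_integral integrable_npdf (.of_forall npdf_nonneg)

lemma abs_ncdf_le_one (x : ℝ) : |ncdf x| ≤ 1 :=
  abs_le.mpr ⟨by linarith [ncdf_nonneg x], ncdf_le_one x⟩

lemma hasDerivAt_ncdf (x : ℝ) : HasDerivAt ncdf (npdf x) x := by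
  have hsplit : ncdf = fun y => ncdf 0 + ∫ t in (0 : ℝ)..y, npdf t := by
    funext y
    have := intervalIntegral.integral_Iic_sub_Iic (μ := volume) (a := 0) (b := y)
      integrable_npdf.integrableOn integrable_npdf.integrableOn
    rw [ncdf, ncdf]; linarith
  rw [hsplit]
  exact (intervalIntegral.integral_hasDerivAt_right integrable_npdf.intervalIntegrable
    continuous_npdf.stronglyMeasurable.stronglyMeasurableAtFilter
    continuous_npdf.continuousAt).const_add _

@[fun_prop]
lemma continuous_ncdf : Continuous ncdf :=
  continuous_iff_continuousAt.mpr fun x => (hasDerivAt_ncdf x).continuousAt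

theorem integral_mul_eq_integral_deriv_gaussianReal {g g' : ℝ → ℝ} {C C' : ℝ}
    (hg : ∀ x, HasDerivAt g (g' x) x) (hgC : ∀ x, |g x| ≤ C) (hg'C : ∀ x, |g' x| ≤ C') :
    ∫ x, x * g x ∂gaussianReal 0 1 = ∫ x, g' x ∂gaussianReal 0 1 := by
  have hg_meas : AEStronglyMeasurable g :=
    (continuous_iff_continuousAt.mpr fun x => (hg x).continuousAt).aestronglyMeasurable
  have hg'_meas : AEStronglyMeasurable g' := by
    rw [show g' = deriv g from funext fun x => (hg x).deriv.symm]
    exact (measurable_deriv g).aestronglyMeasurable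
  have hint : Integrable fun x => g x * (-x * npdf x) := by
    simpa only [Pi.neg_apply, neg_mul] using
      integrable_mul_npdf.neg.bdd_mul hg_meas (.of_forall hgC)
  have parts := integral_mul_deriv_eq_deriv_mul_of_integrable (fun x _ => hg x)
    (fun x _ => hasDerivAt_npdf x) hint
    (integrable_npdf.bdd_mul hg'_meas (.of_forall hg'C))
    (integrable_npdf.bdd_mul hg_meas (.of_forall hgC))
  simp only [integral_gaussianReal_eq_integral_smul one_ne_zero, ← npdf_eq_gaussianPDFReal,
    smul_eq_mul]
  calc ∫ x, npdf x * (x * g x) = -∫ x, g x * (-x * npdf x) := by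
        rw [← integral_neg]; congr 1; funext x; ring
    _ = ∫ x, npdf x * g' x := by
        rw [parts, neg_neg]; congr 1; funext x; ring

section ProductGaussian

variable {β : Type*} [MeasurableSpace β] {ν : Measure β} [IsFiniteMeasure ν]

lemma integrable_fst_mul_prod_gaussianReal {g : ℝ × β → ℝ} {C : ℝ}
    (hg_meas : AEStronglyMeasurable g ((gaussianReal 0 1).prod ν)) (hgC : ∀ w, |g w| ≤ C) :
    Integrable (fun w => w.1 * g w) ((gaussianReal 0 1).prod ν) :=
  (((memLp_id_gaussianReal 1).integrable le_rfl).comp_fst ν).mul_bdd hg_meas (.of_forall hgC)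

theorem integral_fst_mul_eq_integral_deriv_prod_gaussianReal {g g' : ℝ × β → ℝ} {C C' : ℝ}
    (hg : ∀ x y, HasDerivAt (fun t => g (t, y)) (g' (x, y)) x)
    (hg_meas : AEStronglyMeasurable g ((gaussianReal 0 1).prod ν))
    (hg'_meas : AEStronglyMeasurable g' ((gaussianReal 0 1).prod ν))
    (hgC : ∀ w, |g w| ≤ C) (hg'C : ∀ w, |g' w| ≤ C') :
    ∫ w, w.1 * g w ∂(gaussianReal 0 1).prod ν = ∫ w, g' w ∂(gaussianReal 0 1).prod ν := by
  rw [integral_prod_symm _ (integrable_fst_mul_prod_gaussianReal hg_meas hgC),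
    integral_prod_symm _ (.of_bound hg'_meas C' (.of_forall hg'C))]
  congr 1
  funext y
  exact integral_mul_eq_integral_deriv_gaussianReal (hg · y) (fun x => hgC (x, y))
    (fun x => hg'C (x, y))

end ProductGaussian

lemma abs_deriv_npdf_mul_ncdf_le_one (x y : ℝ) : |deriv npdf x * ncdf y| ≤ 1 := by
  rw [abs_mul]; exact mul_le_one₀ (abs_deriv_npdf_le_one x) (abs_nonneg _) (abs_ncdf_le_one y)

lemma abs_npdf_mul_ncdf_le_one (x y : ℝ) : |npdf x * ncdf y| ≤ 1 := by
  rw [abs_mul]; exact mul_le_one₀ (abs_npdf_le_one x) (abs_nonneg _) (abs_ncdf_le_one y)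

lemma abs_npdf_mul_npdf_le_one (x y : ℝ) : |npdf x * npdf y| ≤ 1 := by
  rw [abs_mul]; exact mul_le_one₀ (abs_npdf_le_one x) (abs_nonneg _) (abs_npdf_le_one y)

instance : IsProbabilityMeasure P2 := by
  unfold P2; infer_instance

section BivariateGaussian

variable (μ₁ μ₂ a b c : ℝ)

lemma integrable_deriv_npdf_mul_ncdf :
    Integrable (fun w : ℝ × ℝ => deriv npdf (μ₁ + a * w.1) * ncdf (μ₂ + b * w.1 + c * w.2)) P2 :=
  .of_bound (by fun_prop) 1 (.of_forall fun _ => abs_deriv_npdf_mul_ncdf_le_one _ _)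

lemma integrable_npdf_mul_ncdf :
    Integrable (fun w : ℝ × ℝ => npdf (μ₁ + a * w.1) * ncdf (μ₂ + b * w.1 + c * w.2)) P2 :=
  .of_bound (by fun_prop) 1 (.of_forall fun _ => abs_npdf_mul_ncdf_le_one _ _)

lemma integrable_npdf_mul_npdf :
    Integrable (fun w : ℝ × ℝ => npdf (μ₁ + a * w.1) * npdf (μ₂ + b * w.1 + c * w.2)) P2 :=
  .of_bound (by fun_prop) 1 (.of_forall fun _ => abs_npdf_mul_npdf_le_one _ _)

lemma integrable_fst_mul_npdf_mul_ncdf :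
    Integrable (fun w : ℝ × ℝ => w.1 * (npdf (μ₁ + a * w.1) * ncdf (μ₂ + b * w.1 + c * w.2)))
      P2 :=
  integrable_fst_mul_prod_gaussianReal (by fun_prop) fun _ => abs_npdf_mul_ncdf_le_one _ _

lemma integral_fst_mul_npdf_mul_ncdf :
    ∫ w : ℝ × ℝ, w.1 * (npdf (μ₁ + a * w.1) * ncdf (μ₂ + b * w.1 + c * w.2)) ∂P2
      = a * ∫ w : ℝ × ℝ, deriv npdf (μ₁ + a * w.1) * ncdf (μ₂ + b * w.1 + c * w.2) ∂P2
        + b * ∫ w : ℝ × ℝ, npdf (μ₁ + a * w.1) * npdf (μ₂ + b * w.1 + c * w.2) ∂P2 := by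
  have hderiv : ∀ x y, HasDerivAt (fun t => npdf (μ₁ + a * t) * ncdf (μ₂ + b * t + c * y))
      (a * (deriv npdf (μ₁ + a * x) * ncdf (μ₂ + b * x + c * y))
        + b * (npdf (μ₁ + a * x) * npdf (μ₂ + b * x + c * y))) x := by
    intro x y
    have hM := (hasDerivAt_npdf _).comp x (((hasDerivAt_id x).const_mul a).const_add μ₁)
    have hZ := (hasDerivAt_ncdf _).comp x
      ((((hasDerivAt_id x).const_mul b).const_add μ₂).add_const (c * y))
    exact (hM.mul hZ).congr_deriv (by simp only [Function.comp_apply, id, deriv_npdf]; ring)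
  have hderiv_bound : ∀ w : ℝ × ℝ,
      |a * (deriv npdf (μ₁ + a * w.1) * ncdf (μ₂ + b * w.1 + c * w.2))
        + b * (npdf (μ₁ + a * w.1) * npdf (μ₂ + b * w.1 + c * w.2))| ≤ |a| + |b| := fun w =>
    calc _ ≤ |a| * |deriv npdf (μ₁ + a * w.1) * ncdf (μ₂ + b * w.1 + c * w.2)|
          + |b| * |npdf (μ₁ + a * w.1) * npdf (μ₂ + b * w.1 + c * w.2)| := by
          rw [← abs_mul, ← abs_mul]; exact abs_add_le _ _
      _ ≤ |a| + |b| := add_le_add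
          (mul_le_of_le_one_right (abs_nonneg a) (abs_deriv_npdf_mul_ncdf_le_one _ _))
          (mul_le_of_le_one_right (abs_nonneg b) (abs_npdf_mul_npdf_le_one _ _))
  rw [← integral_const_mul, ← integral_const_mul,
    ← integral_add ((integrable_deriv_npdf_mul_ncdf μ₁ μ₂ a b c).const_mul a)
      ((integrable_npdf_mul_npdf μ₁ μ₂ a b c).const_mul b)]
  unfold P2
  exact integral_fst_mul_eq_integral_deriv_prod_gaussianReal hderiv (by fun_prop)
    (by fun_prop) (fun _ => abs_npdf_mul_ncdf_le_one _ _) hderiv_bound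

lemma integral_deriv_npdf_mul_ncdf_eq :
    ∫ w : ℝ × ℝ, deriv npdf (μ₁ + a * w.1) * ncdf (μ₂ + b * w.1 + c * w.2) ∂P2
      = -μ₁ * (∫ w : ℝ × ℝ, npdf (μ₁ + a * w.1) * ncdf (μ₂ + b * w.1 + c * w.2) ∂P2)
        - a * ∫ w : ℝ × ℝ, w.1 * (npdf (μ₁ + a * w.1) * ncdf (μ₂ + b * w.1 + c * w.2)) ∂P2 := by
  rw [← integral_const_mul, ← integral_const_mul,
    ← integral_sub ((integrable_npdf_mul_ncdf μ₁ μ₂ a b c).const_mul _)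
      ((integrable_fst_mul_npdf_mul_ncdf μ₁ μ₂ a b c).const_mul _)]
  congr 1
  funext w
  rw [deriv_npdf]; ring

end BivariateGaussian

theorem gaussian_expectation_dnpdf_mul_ncdf_general (μ₁ μ₂ ν₁₁ ν₁₂ a b c : ℝ)
    (h11 : ν₁₁ = a ^ 2) (h12 : ν₁₂ = a * b) :
    ∫ w : ℝ × ℝ, deriv npdf (μ₁ + a * w.1) * ncdf (μ₂ + b * w.1 + c * w.2) ∂P2
      = -(μ₁ / (1 + ν₁₁)) *
          (∫ w : ℝ × ℝ, npdf (μ₁ + a * w.1) * ncdf (μ₂ + b * w.1 + c * w.2) ∂P2)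
        - ν₁₂ / (1 + ν₁₁) *
          (∫ w : ℝ × ℝ, npdf (μ₁ + a * w.1) * npdf (μ₂ + b * w.1 + c * w.2) ∂P2) := by
  have hlinear := integral_deriv_npdf_mul_ncdf_eq μ₁ μ₂ a b c
  rw [integral_fst_mul_npdf_mul_ncdf] at hlinear
  subst h11 h12
  have hsolved : ∫ w : ℝ × ℝ, deriv npdf (μ₁ + a * w.1) * ncdf (μ₂ + b * w.1 + c * w.2) ∂P2
      = (-μ₁ * (∫ w : ℝ × ℝ, npdf (μ₁ + a * w.1) * ncdf (μ₂ + b * w.1 + c * w.2) ∂P2)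
        - a * b * ∫ w : ℝ × ℝ, npdf (μ₁ + a * w.1) * npdf (μ₂ + b * w.1 + c * w.2) ∂P2)
          / (1 + a ^ 2) := by
    rw [eq_div_iff (by positivity)]
    linear_combination hlinear
  rw [hsolved]
  ring

theorem gaussian_expectation_dnpdf_mul_ncdf (μ₁ μ₂ ν₁₁ ν₂₂ ν₁₂ a b c : ℝ)
    (h11 : ν₁₁ = a ^ 2) (h22 : ν₂₂ = b ^ 2 + c ^ 2) (h12 : ν₁₂ = a * b) :
    ∫ w : ℝ × ℝ, deriv npdf (μ₁ + a * w.1) * ncdf (μ₂ + b * w.1 + c * w.2) ∂P2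
      = -(μ₁ / (1 + ν₁₁)) *
          (∫ w : ℝ × ℝ, npdf (μ₁ + a * w.1) * ncdf (μ₂ + b * w.1 + c * w.2) ∂P2)
        - ν₁₂ / (1 + ν₁₁) *
          (∫ w : ℝ × ℝ, npdf (μ₁ + a * w.1) * npdf (μ₂ + b * w.1 + c * w.2) ∂P2) :=
  gaussian_expectation_dnpdf_mul_ncdf_general μ₁ μ₂ ν₁₁ ν₁₂ a b c h11 h12
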